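/- One-shot achievability for the Gelfand–Pinsker channel: Let q_S be a state pmf on a finite set 𝒮 and q_{Y|X,S} a channel from 𝒳 × 𝒮 to 𝒴. For any conditional pmf q_{U|S} from 𝒮 to a finite set 𝒰, any function x : 𝒰 × 𝒮 → 𝒳, and any positive integers M and J, define the joint pmf q(u,s,x,y) = q(s)·q(u|s)·1[x = x(u,s)]·q(y|x,s). Then there exists an M-code (a stochastic encoder φ : [1:M] × 𝒮 → 𝒳 and a stochastic decoder ψ : 𝒴 → [1:M]) such that, with the message M uniform on [1:M] and independent of S ~ q_S, X generated by φ from (M,S), Y generated by q_{Y|X,S}, and M̂ = ψ(Y), the probability of correct decoding satisfies P(M̂ = M) ≥ E_{(U,S,Y) ~ q} [ 1 / ( (1 + J^{−1}·2^{i_q(U;S)}) · (1 + M·J·2^{−i_q(U;Y)}) ) ]. -/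

import Mathlib

open scoped BigOperators

/-- A pmf on a finite type, represented by a nonnegative real-valued function summing to 1. -/
structure FinPMF (α : Type) [Fintype α] where
  p : α → ℝ
  nonneg : ∀ a, 0 ≤ p a
  sum_eq_one : ∑ a, p a = 1

variable {𝓢 𝓤 𝓧 𝓨 : Type} [Fintype 𝓢] [Fintype 𝓤] [Fintype 𝓧] [Fintype 𝓨]

/-- The joint pmf on `(u, s, y)` induced by
`q(u,s,x,y) = q(s) q(u|s) 1[x = x(u,s)] q(y|x,s)` after marginalizing out the
deterministic `x`. -/
noncomputable def qUSY (qS : FinPMF 𝓢) (qU : 𝓢 → FinPMF 𝓤)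
    (W : 𝓧 → 𝓢 → FinPMF 𝓨) (f : 𝓤 → 𝓢 → 𝓧) (u : 𝓤) (s : 𝓢) (y : 𝓨) : ℝ :=
  qS.p s * (qU s).p u * (W (f u s) s).p y

/-- Information density `i_q(U;S)` evaluated at `(u,s)`. -/
noncomputable def iUS (qS : FinPMF 𝓢) (qU : 𝓢 → FinPMF 𝓤) (u : 𝓤) (s : 𝓢) : ℝ :=
  Real.logb 2 ((qS.p s * (qU s).p u) /
    ((∑ s', qS.p s' * (qU s').p u) * qS.p s))

/-- Information density `i_q(U;Y)` evaluated at `(u,y)`. -/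
noncomputable def iUY (qS : FinPMF 𝓢) (qU : 𝓢 → FinPMF 𝓤)
    (W : 𝓧 → 𝓢 → FinPMF 𝓨) (f : 𝓤 → 𝓢 → 𝓧) (u : 𝓤) (y : 𝓨) : ℝ :=
  Real.logb 2 ((∑ s, qUSY qS qU W f u s y) /
    ((∑ s', qS.p s' * (qU s').p u) * (∑ u', ∑ s', qUSY qS qU W f u' s' y)))

/-- Probability of correct decoding for an `M`-code over the state-dependent channel:
message uniform on `Fin M` independent of `S ~ qS`, `X` generated by the stochastic
encoder from `(m, s)`, `Y` by the channel from `(x, s)`, `M̂` by the stochastic decoder. -/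
noncomputable def pCorrectGP (M : ℕ) (qS : FinPMF 𝓢) (W : 𝓧 → 𝓢 → FinPMF 𝓨)
    (enc : Fin M → 𝓢 → FinPMF 𝓧) (dec : 𝓨 → FinPMF (Fin M)) : ℝ :=
  ∑ m : Fin M, ∑ s : 𝓢, ∑ x : 𝓧, ∑ y : 𝓨,
    (1 / (M : ℝ)) * qS.p s * (enc m s).p x * (W x s).p y * (dec y).p m

/-!
Random coding with likelihood encoding and decoding. Draw a codebook `c(m, j)`,
`m ∈ [1:M]`, `j ∈ [1:J]`, i.i.d. from `q_U`. Given `(m, s)` the encoder picks `j` with probability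
proportional to `q(s | c(m, j))` and sends `x(c(m, j), s)`; given `y` the decoder picks `(m', j')`
with probability proportional to `q(y | c(m', j'))` and outputs `m'`. Conditioned on `c(m, j) = u`,
the decoder is correct at least when both pick `(m, j)`, which has probability
`a / (a + A) · q(y | x, s) · b / (b + B)` with `a = q(s|u)`, `b = q(y|u)`, and `A`, `B` the sums of
the other `J - 1`, resp. `MJ - 1`, likelihoods, whose means are `(J - 1) q(s)` and `(MJ - 1) q(y)`.
Jensen's inequality for the convex function `(A, B) ↦ ((a + A) (b + B))⁻¹` bounds the success
probability averaged over codebooks by the claimed expectation, so some codebook attains it.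
-/

open Finset

namespace FinPMF

variable {α β : Type} [Fintype α] [Fintype β]

/-- Falls back to the point mass at `a₀` when all weights vanish. -/
noncomputable def normalize [DecidableEq α] (w : α → ℝ) (hw : ∀ a, 0 ≤ w a) (a₀ : α) :
    FinPMF α where
  p a := if ∑ b, w b = 0 then (if a = a₀ then 1 else 0) else w a / ∑ b, w b
  nonneg a := by
    split_ifs
    · norm_num
    · norm_num
    · exact div_nonneg (hw a) (sum_nonneg fun b _ => hw b)
  sum_eq_one := by
    split_ifs with h
    · simp
    · rw [← sum_div, div_self h]

theorem div_sum_le_normalize_p [DecidableEq α] (w : α → ℝ) (hw : ∀ a, 0 ≤ w a) (a₀ a : α) :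
    w a / ∑ b, w b ≤ (normalize w hw a₀).p a := by
  by_cases h : ∑ b, w b = 0
  · rw [h, div_zero]
    exact (normalize w hw a₀).nonneg a
  · simp [normalize, h]

noncomputable def map [DecidableEq β] (P : FinPMF α) (h : α → β) : FinPMF β where
  p b := ∑ a, if h a = b then P.p a else 0
  nonneg b := sum_nonneg fun a _ => by split_ifs <;> simp [P.nonneg a]
  sum_eq_one := by
    rw [sum_comm]
    simp [P.sum_eq_one]

theorem sum_map_p_mul [DecidableEq β] (P : FinPMF α) (h : α → β) (F : β → ℝ) :
    ∑ b, (P.map h).p b * F b = ∑ a, P.p a * F (h a) := by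
  simp only [map, sum_mul, ite_mul, zero_mul]
  rw [sum_comm]
  simp

theorem p_le_map_p_apply [DecidableEq β] (P : FinPMF α) (h : α → β) (a : α) :
    P.p a ≤ (P.map h).p (h a) := by
  have : P.p a = if h a = h a then P.p a else 0 := by simp
  rw [this]
  exact single_le_sum (f := fun a' => if h a' = h a then P.p a' else 0)
    (fun a' _ => by split_ifs <;> simp [P.nonneg a']) (mem_univ a)

end FinPMF

theorem exists_le_of_le_sum_mul {ι : Type} [Fintype ι] {P F : ι → ℝ} {r : ℝ}
    (hP : ∀ i, 0 ≤ P i) (hP₁ : ∑ i, P i = 1) (h : r ≤ ∑ i, P i * F i) : ∃ i, r ≤ F i := by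
  by_contra! hlt
  obtain ⟨i₀, -, hi₀⟩ := exists_ne_zero_of_sum_ne_zero (hP₁ ▸ one_ne_zero : ∑ i, P i ≠ 0)
  have : ∑ i, P i * F i < ∑ i, P i * r :=
    sum_lt_sum (fun i _ => mul_le_mul_of_nonneg_left (hlt i).le (hP i))
      ⟨i₀, mem_univ _, mul_lt_mul_of_pos_left (hlt i₀) ((hP i₀).lt_of_ne' hi₀)⟩
  rw [← sum_mul, hP₁, one_mul] at this
  linarith

/-- The left side is the tangent plane of the convex function `(p, q) ↦ (p q)⁻¹` at `(p₀, q₀)`. -/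
theorem tangent_plane_le_inv_mul {p q p₀ q₀ : ℝ} (hp : 0 < p) (hq : 0 < q) (hp₀ : 0 < p₀)
    (hq₀ : 0 < q₀) : (3 - p / p₀ - q / q₀) / (p₀ * q₀) ≤ (p * q)⁻¹ := by
  set x := p / p₀
  set y := q / q₀
  have hx : 0 < x := div_pos hp hp₀
  have hy : 0 < y := div_pos hq hq₀
  have amgm : x * y * (3 - x - y) ≤ 1 := by
    nlinarith [sq_nonneg (x - 1), sq_nonneg (y - 1), sq_nonneg (x - y), mul_pos hx hy,
      sq_nonneg (x + y - 2)]
  have hpq : p * q = x * y * (p₀ * q₀) := by simp only [x, y]; field_simp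
  rw [hpq, mul_inv, div_eq_mul_inv]
  refine mul_le_mul_of_nonneg_right ?_ (by positivity)
  rw [← one_div, le_div_iff₀ (by positivity)]
  linarith

/-- Jensen's inequality for the convex function `(p, q) ↦ (p q)⁻¹`. -/
theorem inv_mul_le_sum_mul_inv_mul {ι : Type} [Fintype ι] {P p q : ι → ℝ} {p₀ q₀ : ℝ}
    (hP : ∀ i, 0 ≤ P i) (hP₁ : ∑ i, P i = 1)
    (hp : ∀ i, P i ≠ 0 → 0 < p i) (hq : ∀ i, P i ≠ 0 → 0 < q i)
    (hp₀ : 0 < p₀) (hq₀ : 0 < q₀) (hmp : ∑ i, P i * p i ≤ p₀) (hmq : ∑ i, P i * q i ≤ q₀) :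
    (p₀ * q₀)⁻¹ ≤ ∑ i, P i * (p i * q i)⁻¹ := by
  have tangent : ∀ i, P i * ((3 - p i / p₀ - q i / q₀) / (p₀ * q₀)) ≤ P i * (p i * q i)⁻¹ := by
    intro i
    by_cases hPi : P i = 0
    · simp [hPi]
    · exact mul_le_mul_of_nonneg_left
        (tangent_plane_le_inv_mul (hp i hPi) (hq i hPi) hp₀ hq₀) (hP i)
  calc (p₀ * q₀)⁻¹ = 3 / (p₀ * q₀) - 1 / (p₀ ^ 2 * q₀) * p₀ - 1 / (p₀ * q₀ ^ 2) * q₀ := by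
        field_simp
        ring
    _ ≤ 3 / (p₀ * q₀) * ∑ i, P i - 1 / (p₀ ^ 2 * q₀) * ∑ i, P i * p i
          - 1 / (p₀ * q₀ ^ 2) * ∑ i, P i * q i := by
        rw [hP₁, mul_one]
        gcongr
    _ = ∑ i, P i * ((3 - p i / p₀ - q i / q₀) / (p₀ * q₀)) := by
        rw [mul_sum, mul_sum, mul_sum, ← sum_sub_distrib, ← sum_sub_distrib]
        refine sum_congr rfl fun i _ => ?_
        field_simp
    _ ≤ ∑ i, P i * (p i * q i)⁻¹ := sum_le_sum fun i _ => tangent i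

section ProductWeight

variable {K α : Type} [Fintype K] [DecidableEq K] [Fintype α]

theorem sum_prod_mul_prod (g : α → ℝ) (F : K → α → ℝ) :
    ∑ c : K → α, (∏ k, g (c k)) * ∏ k, F k (c k) = ∏ k, ∑ v, g v * F k v := by
  simp only [Fintype.prod_sum, ← prod_mul_distrib]

variable {g : α → ℝ}

theorem sum_prod_mul_apply (hg : ∑ v, g v = 1) (k₀ : K) (φ : α → ℝ) :
    ∑ c : K → α, (∏ k, g (c k)) * φ (c k₀) = ∑ v, g v * φ v := by
  have h := sum_prod_mul_prod g fun k v => if k = k₀ then φ v else 1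
  simp only [prod_ite_eq', mem_univ, if_true] at h
  rw [h, prod_eq_single k₀ (fun k _ hk => by simp [hk, hg]) (by simp)]
  simp

theorem sum_prod_mul_apply_mul_apply (hg : ∑ v, g v = 1) {k₀ k₁ : K} (hk : k₀ ≠ k₁)
    (φ ψ : α → ℝ) :
    ∑ c : K → α, (∏ k, g (c k)) * (φ (c k₀) * ψ (c k₁))
      = (∑ v, g v * φ v) * ∑ v, g v * ψ v := by
  have h := sum_prod_mul_prod g fun k v => (if k = k₀ then φ v else 1) * (if k = k₁ then ψ v else 1)
  simp only [prod_mul_distrib, prod_ite_eq', mem_univ, if_true] at h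
  rw [h, prod_eq_mul k₀ k₁ hk (fun k _ hk' => by simp [hk'.1, hk'.2, hg]) (by simp) (by simp)]
  simp [hk, hk.symm]

theorem sum_prod_mul_indicator_mul_sum [DecidableEq α] (hg : ∑ v, g v = 1) {ι : Type}
    [Fintype ι] (e : ι ↪ K) (i₀ : ι) (u : α) (ψ : α → ℝ) :
    ∑ c : K → α, (∏ k, g (c k)) * (if c (e i₀) = u then 1 else 0) * ∑ i, ψ (c (e i))
      = g u * (ψ u + (Fintype.card ι - 1) * ∑ v, g v * ψ v) := by
  classical
  have split : ∀ c : K → α, (∏ k, g (c k)) * (if c (e i₀) = u then 1 else 0) * ∑ i, ψ (c (e i))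
      = (∏ k, g (c k)) * (if c (e i₀) = u then 1 else 0) * ψ (c (e i₀))
        + ∑ i ∈ univ.erase i₀, (∏ k, g (c k)) * (if c (e i₀) = u then 1 else 0) * ψ (c (e i)) :=
    fun c => by rw [← add_sum_erase univ _ (mem_univ i₀), mul_add, mul_sum]
  have diagonal : ∑ c : K → α, (∏ k, g (c k)) * (if c (e i₀) = u then 1 else 0) * ψ (c (e i₀))
      = g u * ψ u := by
    simp_rw [mul_assoc]
    rw [sum_prod_mul_apply hg (e i₀) fun v => (if v = u then 1 else 0) * ψ v]
    simp
  have off_diagonal : ∀ i ∈ univ.erase i₀,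
      ∑ c : K → α, (∏ k, g (c k)) * (if c (e i₀) = u then 1 else 0) * ψ (c (e i))
        = g u * ∑ v, g v * ψ v := by
    intro i hi
    simp_rw [mul_assoc]
    rw [sum_prod_mul_apply_mul_apply hg (e.injective.ne (ne_of_mem_erase hi).symm)
      (fun v => if v = u then 1 else 0) ψ]
    simp
  have hcard : ((univ.erase i₀).card : ℝ) = Fintype.card ι - 1 := by
    rw [card_erase_of_mem (mem_univ _), card_univ,
      Nat.cast_sub (Fintype.card_pos_iff.mpr ⟨i₀⟩), Nat.cast_one]
  rw [sum_congr rfl fun c _ => split c, sum_add_distrib, sum_comm, diagonal,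
    sum_congr rfl off_diagonal, sum_const, nsmul_eq_mul, hcard]
  ring

theorem mul_inv_le_sum_prod_indicator_mul_inv [DecidableEq α] (hg₀ : ∀ v, 0 ≤ g v)
    (hg : ∑ v, g v = 1) {ι₁ ι₂ : Type} [Fintype ι₁] [Fintype ι₂] (e₁ : ι₁ ↪ K) (e₂ : ι₂ ↪ K)
    {i₁ : ι₁} {i₂ : ι₂} (he : e₁ i₁ = e₂ i₂) {ω₁ ω₂ : α → ℝ} (hω₁ : ∀ v, 0 ≤ ω₁ v)
    (hω₂ : ∀ v, 0 ≤ ω₂ v) {u : α} (hgu : 0 < g u) (hu₁ : 0 < ω₁ u) (hu₂ : 0 < ω₂ u) :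
    g u * ((ω₁ u + Fintype.card ι₁ * ∑ v, g v * ω₁ v)
        * (ω₂ u + Fintype.card ι₂ * ∑ v, g v * ω₂ v))⁻¹
      ≤ ∑ c : K → α, (∏ k, g (c k)) * (if c (e₁ i₁) = u then 1 else 0)
          * ((∑ i, ω₁ (c (e₁ i))) * ∑ i, ω₂ (c (e₂ i)))⁻¹ := by
  -- the law of the codebook `c` conditioned on `c (e₁ i₁) = u`
  set P : (K → α) → ℝ := fun c => (∏ k, g (c k)) * (if c (e₁ i₁) = u then 1 else 0) / g u
  have hP : ∀ c, 0 ≤ P c := fun c =>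
    div_nonneg (mul_nonneg (prod_nonneg fun k _ => hg₀ _) (by split_ifs <;> norm_num)) hgu.le
  have hP₁ : ∑ c, P c = 1 := by
    rw [← sum_div, sum_prod_mul_apply hg (e₁ i₁) fun v => if v = u then 1 else 0]
    simp [hgu.ne']
  have hsupp : ∀ c, P c ≠ 0 → c (e₁ i₁) = u := fun c hc => by
    by_contra h
    simp [P, h] at hc
  have hmean_nonneg : ∀ ω : α → ℝ, (∀ v, 0 ≤ ω v) → 0 ≤ ∑ v, g v * ω v :=
    fun ω hω => sum_nonneg fun v _ => mul_nonneg (hg₀ v) (hω v)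
  have hmean : ∀ (ι : Type) [Fintype ι] (e : ι ↪ K) (i : ι) (ω : α → ℝ), (∀ v, 0 ≤ ω v) →
      e i = e₁ i₁ → ∑ c, P c * ∑ i, ω (c (e i)) ≤ ω u + Fintype.card ι * ∑ v, g v * ω v := by
    intro ι _ e i ω hω hei
    simp only [P, div_mul_eq_mul_div, ← sum_div, ← hei]
    rw [sum_prod_mul_indicator_mul_sum hg, mul_div_cancel_left₀ _ hgu.ne']
    nlinarith [hmean_nonneg ω hω]
  have hpos₁ : ∀ c, P c ≠ 0 → 0 < ∑ i, ω₁ (c (e₁ i)) := fun c hc =>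
    (show 0 < ω₁ (c (e₁ i₁)) by rwa [hsupp c hc]).trans_le
      (single_le_sum (f := fun i => ω₁ (c (e₁ i))) (fun i _ => hω₁ _) (mem_univ i₁))
  have hpos₂ : ∀ c, P c ≠ 0 → 0 < ∑ i, ω₂ (c (e₂ i)) := fun c hc =>
    (show 0 < ω₂ (c (e₂ i₂)) by rwa [← he, hsupp c hc]).trans_le
      (single_le_sum (f := fun i => ω₂ (c (e₂ i))) (fun i _ => hω₂ _) (mem_univ i₂))
  have jensen := inv_mul_le_sum_mul_inv_mul hP hP₁ hpos₁ hpos₂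
    (add_pos_of_pos_of_nonneg hu₁ (mul_nonneg (Nat.cast_nonneg _) (hmean_nonneg ω₁ hω₁)))
    (add_pos_of_pos_of_nonneg hu₂ (mul_nonneg (Nat.cast_nonneg _) (hmean_nonneg ω₂ hω₂)))
    (hmean ι₁ e₁ i₁ ω₁ hω₁ rfl) (hmean ι₂ e₂ i₂ ω₂ hω₂ he.symm)
  calc _ ≤ g u * ∑ c, P c * ((∑ i, ω₁ (c (e₁ i))) * ∑ i, ω₂ (c (e₂ i)))⁻¹ :=
        mul_le_mul_of_nonneg_left jensen hgu.le
    _ = _ := by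
        rw [mul_sum]
        refine sum_congr rfl fun c _ => ?_
        simp only [P]
        field_simp

end ProductWeight

namespace GelfandPinsker

set_option linter.unusedSectionVars false

variable (qS : FinPMF 𝓢) (qU : 𝓢 → FinPMF 𝓤) (W : 𝓧 → 𝓢 → FinPMF 𝓨) (f : 𝓤 → 𝓢 → 𝓧)

noncomputable def jointUS (u : 𝓤) (s : 𝓢) : ℝ := qS.p s * (qU s).p u

noncomputable def margU (u : 𝓤) : ℝ := ∑ s, jointUS qS qU u s

noncomputable def jointUY (u : 𝓤) (y : 𝓨) : ℝ := ∑ s, qUSY qS qU W f u s y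

noncomputable def margY (y : 𝓨) : ℝ := ∑ u, jointUY qS qU W f u y

/-- `q(s|u)`, with the junk value `0` when `q(u) = 0`; it only ever appears weighted by `q(u)`. -/
noncomputable def condS (s : 𝓢) (u : 𝓤) : ℝ := jointUS qS qU u s / margU qS qU u

noncomputable def condY (y : 𝓨) (u : 𝓤) : ℝ := jointUY qS qU W f u y / margU qS qU u

theorem jointUS_nonneg (u : 𝓤) (s : 𝓢) : 0 ≤ jointUS qS qU u s :=
  mul_nonneg (qS.nonneg s) ((qU s).nonneg u)

theorem qUSY_nonneg (u : 𝓤) (s : 𝓢) (y : 𝓨) : 0 ≤ qUSY qS qU W f u s y :=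
  mul_nonneg (jointUS_nonneg qS qU u s) ((W (f u s) s).nonneg y)

theorem margU_nonneg (u : 𝓤) : 0 ≤ margU qS qU u :=
  sum_nonneg fun s _ => jointUS_nonneg qS qU u s

theorem jointUY_nonneg (u : 𝓤) (y : 𝓨) : 0 ≤ jointUY qS qU W f u y :=
  sum_nonneg fun s _ => qUSY_nonneg qS qU W f u s y

theorem condS_nonneg (s : 𝓢) (u : 𝓤) : 0 ≤ condS qS qU s u :=
  div_nonneg (jointUS_nonneg qS qU u s) (margU_nonneg qS qU u)

theorem condY_nonneg (y : 𝓨) (u : 𝓤) : 0 ≤ condY qS qU W f y u :=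
  div_nonneg (jointUY_nonneg qS qU W f u y) (margU_nonneg qS qU u)

theorem sum_margU : ∑ u, margU qS qU u = 1 := by
  simp only [margU, jointUS]
  rw [sum_comm]
  simp [← mul_sum, (qU _).sum_eq_one, qS.sum_eq_one]

theorem jointUS_le_margU (u : 𝓤) (s : 𝓢) : jointUS qS qU u s ≤ margU qS qU u :=
  single_le_sum (fun s _ => jointUS_nonneg qS qU u s) (mem_univ s)

theorem qUSY_le_jointUS (u : 𝓤) (s : 𝓢) (y : 𝓨) : qUSY qS qU W f u s y ≤ jointUS qS qU u s := by
  have hW : (W (f u s) s).p y ≤ 1 :=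
    (W (f u s) s).sum_eq_one ▸ single_le_sum (fun y _ => (W (f u s) s).nonneg y) (mem_univ y)
  exact mul_le_of_le_one_right (jointUS_nonneg qS qU u s) hW

theorem jointUY_le_margU (u : 𝓤) (y : 𝓨) : jointUY qS qU W f u y ≤ margU qS qU u :=
  sum_le_sum fun s _ => qUSY_le_jointUS qS qU W f u s y

theorem qUSY_le_jointUY (u : 𝓤) (s : 𝓢) (y : 𝓨) :
    qUSY qS qU W f u s y ≤ jointUY qS qU W f u y :=
  single_le_sum (f := fun s => qUSY qS qU W f u s y) (fun s _ => qUSY_nonneg qS qU W f u s y)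
    (mem_univ s)

theorem jointUY_le_margY (u : 𝓤) (y : 𝓨) : jointUY qS qU W f u y ≤ margY qS qU W f y :=
  single_le_sum (f := fun u => jointUY qS qU W f u y) (fun u _ => jointUY_nonneg qS qU W f u y)
    (mem_univ u)

theorem margU_mul_condS (s : 𝓢) (u : 𝓤) :
    margU qS qU u * condS qS qU s u = jointUS qS qU u s :=
  mul_div_cancel_of_imp' fun h =>
    le_antisymm (h ▸ jointUS_le_margU qS qU u s) (jointUS_nonneg qS qU u s)

theorem margU_mul_condY (y : 𝓨) (u : 𝓤) :
    margU qS qU u * condY qS qU W f y u = jointUY qS qU W f u y :=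
  mul_div_cancel_of_imp' fun h =>
    le_antisymm (h ▸ jointUY_le_margU qS qU W f u y) (jointUY_nonneg qS qU W f u y)

theorem sum_margU_mul_condS (s : 𝓢) : ∑ u, margU qS qU u * condS qS qU s u = qS.p s := by
  simp [margU_mul_condS, jointUS, ← mul_sum, (qU s).sum_eq_one]

theorem sum_margU_mul_condY (y : 𝓨) :
    ∑ u, margU qS qU u * condY qS qU W f y u = margY qS qU W f y := by
  simp only [margU_mul_condY, margY]

theorem rpow_iUS {u : 𝓤} {s : 𝓢} (h : 0 < jointUS qS qU u s) :
    (2 : ℝ) ^ iUS qS qU u s = condS qS qU s u / qS.p s := by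
  have hU := h.trans_le (jointUS_le_margU qS qU u s)
  have hS : 0 < qS.p s := pos_of_mul_pos_left h ((qU s).nonneg u)
  rw [iUS, Real.rpow_logb (by norm_num) (by norm_num) (by positivity)]
  exact (div_div _ _ _).symm

theorem rpow_neg_iUY {u : 𝓤} {y : 𝓨} (h : 0 < jointUY qS qU W f u y) :
    (2 : ℝ) ^ (-iUY qS qU W f u y) = margY qS qU W f y / condY qS qU W f y u := by
  have hU := h.trans_le (jointUY_le_margU qS qU W f u y)
  have hY := h.trans_le (jointUY_le_margY qS qU W f u y)
  rw [Real.rpow_neg (by norm_num), iUY, Real.rpow_logb (by norm_num) (by norm_num)]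
  · simp only [condY, margY, jointUY, margU, jointUS]
    field_simp
  · exact div_pos h (mul_pos hU hY)

variable {M J : ℕ}

noncomputable def codebookLaw (c : Fin M × Fin J → 𝓤) : ℝ := ∏ k, margU qS qU (c k)

theorem codebookLaw_nonneg (c : Fin M × Fin J → 𝓤) : 0 ≤ codebookLaw qS qU c :=
  prod_nonneg fun k _ => margU_nonneg qS qU (c k)

theorem sum_codebookLaw : ∑ c : Fin M × Fin J → 𝓤, codebookLaw qS qU c = 1 := by
  simp [codebookLaw, ← Fintype.prod_sum, sum_margU]

open Classical in
noncomputable def likelihoodEncoder (hJ : 0 < J) (c : Fin M × Fin J → 𝓤) (m : Fin M) (s : 𝓢) :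
    FinPMF 𝓧 :=
  (FinPMF.normalize (fun j => condS qS qU s (c (m, j))) (fun _ => condS_nonneg qS qU _ _)
    ⟨0, hJ⟩).map fun j => f (c (m, j)) s

noncomputable def likelihoodDecoder (hM : 0 < M) (hJ : 0 < J) (c : Fin M × Fin J → 𝓤) (y : 𝓨) :
    FinPMF (Fin M) :=
  (FinPMF.normalize (fun k => condY qS qU W f y (c k)) (fun _ => condY_nonneg qS qU W f _ _)
    (⟨0, hM⟩, ⟨0, hJ⟩)).map Prod.fst

/-- Contribution to correct decoding of the event that the encoder and the decoder both select
the index `(m, j)`, whose codeword is `u`. -/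
noncomputable def matchTerm (c : Fin M × Fin J → 𝓤) (m : Fin M) (s : 𝓢) (y : 𝓨) (u : 𝓤) : ℝ :=
  (M : ℝ)⁻¹ * qS.p s * (W (f u s) s).p y * (condS qS qU s u * condY qS qU W f y u
    * ((∑ j, condS qS qU s (c (m, j))) * ∑ k, condY qS qU W f y (c k))⁻¹)

theorem sum_matchTerm_le_pCorrectGP (hM : 0 < M) (hJ : 0 < J) (c : Fin M × Fin J → 𝓤) :
    ∑ m, ∑ s, ∑ j, ∑ y, matchTerm qS qU W f c m s y (c (m, j))
      ≤ pCorrectGP M qS W (likelihoodEncoder qS qU f hJ c)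
          (likelihoodDecoder qS qU W f hM hJ c) := by
  classical
  refine sum_le_sum fun m _ => sum_le_sum fun s _ => ?_
  set ρ := FinPMF.normalize (fun j => condS qS qU s (c (m, j))) (fun _ => condS_nonneg qS qU _ _)
    ⟨0, hJ⟩
  have henc : ∀ j, condS qS qU s (c (m, j)) / ∑ j', condS qS qU s (c (m, j')) ≤ ρ.p j :=
    FinPMF.div_sum_le_normalize_p _ _ _
  have hdec : ∀ y j, condY qS qU W f y (c (m, j)) / ∑ k, condY qS qU W f y (c k)
      ≤ (likelihoodDecoder qS qU W f hM hJ c y).p m := fun y j =>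
    (FinPMF.div_sum_le_normalize_p (fun k => condY qS qU W f y (c k)) _ _ (m, j)).trans
      (FinPMF.p_le_map_p_apply _ Prod.fst (m, j))
  calc ∑ j, ∑ y, matchTerm qS qU W f c m s y (c (m, j))
      ≤ ∑ j, ρ.p j * ∑ y, (1 / (M : ℝ)) * qS.p s * (W (f (c (m, j)) s) s).p y
          * (likelihoodDecoder qS qU W f hM hJ c y).p m := by
        refine sum_le_sum fun j _ => ?_
        rw [mul_sum]
        refine sum_le_sum fun y _ => ?_
        have hw : 0 ≤ (1 / (M : ℝ)) * qS.p s * (W (f (c (m, j)) s) s).p y :=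
          mul_nonneg (mul_nonneg (by positivity) (qS.nonneg s)) ((W _ s).nonneg y)
        calc matchTerm qS qU W f c m s y (c (m, j))
            = (condS qS qU s (c (m, j)) / ∑ j', condS qS qU s (c (m, j')))
              * ((1 / (M : ℝ)) * qS.p s * (W (f (c (m, j)) s) s).p y
                * (condY qS qU W f y (c (m, j)) / ∑ k, condY qS qU W f y (c k))) := by
              simp only [matchTerm]
              ring
          _ ≤ _ := by
              refine mul_le_mul (henc j) (mul_le_mul_of_nonneg_left (hdec y j) hw)
                (mul_nonneg hw (div_nonneg (condY_nonneg ..) ?_)) (ρ.nonneg j)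
              exact sum_nonneg fun k _ => condY_nonneg ..
    _ = ∑ x, (likelihoodEncoder qS qU f hJ c m s).p x * ∑ y, (1 / (M : ℝ)) * qS.p s
          * (W x s).p y * (likelihoodDecoder qS qU W f hM hJ c y).p m :=
        (FinPMF.sum_map_p_mul ρ _ fun x => ∑ y, (1 / (M : ℝ)) * qS.p s
          * (W x s).p y * (likelihoodDecoder qS qU W f hM hJ c y).p m).symm
    _ = ∑ x, ∑ y, 1 / (M : ℝ) * qS.p s * (likelihoodEncoder qS qU f hJ c m s).p x * (W x s).p y
          * (likelihoodDecoder qS qU W f hM hJ c y).p m := by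
        simp only [mul_sum]
        exact sum_congr rfl fun x _ => sum_congr rfl fun y _ => by ring

theorem matchTerm_nonneg (c : Fin M × Fin J → 𝓤) (m : Fin M) (s : 𝓢) (y : 𝓨) (u : 𝓤) :
    0 ≤ matchTerm qS qU W f c m s y u := by
  have := qS.nonneg s
  have := (W (f u s) s).nonneg y
  have := condS_nonneg qS qU s u
  have := condY_nonneg qS qU W f y u
  have : 0 ≤ ∑ j, condS qS qU s (c (m, j)) := sum_nonneg fun j _ => condS_nonneg ..
  have : 0 ≤ ∑ k, condY qS qU W f y (c k) := sum_nonneg fun k _ => condY_nonneg ..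
  unfold matchTerm
  positivity

variable (M J) in
noncomputable def boundTerm (u : 𝓤) (s : 𝓢) (y : 𝓨) : ℝ :=
  qUSY qS qU W f u s y * ((1 + (J : ℝ)⁻¹ * (2 : ℝ) ^ iUS qS qU u s)
    * (1 + (M : ℝ) * J * (2 : ℝ) ^ (-iUY qS qU W f u y)))⁻¹

theorem inv_mul_boundTerm_eq {u : 𝓤} {s : 𝓢} {y : 𝓨} (hJ : 0 < J)
    (hq : 0 < qUSY qS qU W f u s y) :
    ((M : ℝ) * J)⁻¹ * boundTerm qS qU W f M J u s y
      = (M : ℝ)⁻¹ * qS.p s * (W (f u s) s).p y * (condS qS qU s u * condY qS qU W f y u)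
        * (margU qS qU u * ((condS qS qU s u + J * qS.p s)
          * (condY qS qU W f y u + (M * J : ℕ) * margY qS qU W f y))⁻¹) := by
  have hUS : 0 < jointUS qS qU u s := pos_of_mul_pos_left hq ((W _ s).nonneg y)
  have hS : 0 < qS.p s := pos_of_mul_pos_left hUS ((qU s).nonneg u)
  have hU : 0 < margU qS qU u := hUS.trans_le (jointUS_le_margU ..)
  have hUY := hq.trans_le (qUSY_le_jointUY qS qU W f u s y)
  have hb : 0 < condY qS qU W f y u := div_pos hUY hU
  have hq' : qUSY qS qU W f u s y = margU qS qU u * condS qS qU s u * (W (f u s) s).p y := by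
    rw [margU_mul_condS]
    rfl
  rw [boundTerm, rpow_iUS qS qU hUS, rpow_neg_iUY qS qU W f hUY, hq']
  push_cast
  field_simp
  ring

theorem inv_mul_boundTerm_le [DecidableEq 𝓤] (hJ : 0 < J) (m : Fin M) (j : Fin J) (s : 𝓢)
    (y : 𝓨) (u : 𝓤) :
    ((M : ℝ) * J)⁻¹ * boundTerm qS qU W f M J u s y
      ≤ ∑ c, codebookLaw qS qU c * (if c (m, j) = u then 1 else 0)
          * matchTerm qS qU W f c m s y u := by
  rcases (qUSY_nonneg qS qU W f u s y).eq_or_lt with h₀ | hq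
  · rw [boundTerm, ← h₀, zero_mul, mul_zero]
    exact sum_nonneg fun c _ => mul_nonneg
      (mul_nonneg (codebookLaw_nonneg ..) (by split_ifs <;> norm_num)) (matchTerm_nonneg ..)
  have hUS : 0 < jointUS qS qU u s := pos_of_mul_pos_left hq ((W _ s).nonneg y)
  have hU : 0 < margU qS qU u := hUS.trans_le (jointUS_le_margU ..)
  have hUY := hq.trans_le (qUSY_le_jointUY qS qU W f u s y)
  have key := mul_inv_le_sum_prod_indicator_mul_inv (margU_nonneg qS qU) (sum_margU qS qU)
    (Function.Embedding.sectR m (Fin J)) (Function.Embedding.refl _) (i₁ := j) (i₂ := (m, j)) rfl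
    (condS_nonneg qS qU s) (condY_nonneg qS qU W f y) hU (div_pos hUS hU) (div_pos hUY hU)
  rw [sum_margU_mul_condS, sum_margU_mul_condY, Fintype.card_fin, Fintype.card_prod,
    Fintype.card_fin, Fintype.card_fin] at key
  rw [inv_mul_boundTerm_eq qS qU W f hJ hq]
  calc _ ≤ _ := mul_le_mul_of_nonneg_left key (mul_nonneg (mul_nonneg (mul_nonneg
        (inv_nonneg.2 (Nat.cast_nonneg _)) (qS.nonneg s)) ((W _ s).nonneg y))
          (mul_nonneg (condS_nonneg ..) (condY_nonneg ..)))
    _ = _ := by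
        rw [mul_sum]
        refine sum_congr rfl fun c _ => ?_
        simp only [matchTerm, codebookLaw, Function.Embedding.sectR_apply,
          Function.Embedding.refl_apply]
        ring

theorem sum_boundTerm_le_sum_codebookLaw_mul [DecidableEq 𝓤] (hM : 0 < M) (hJ : 0 < J) :
    ∑ u, ∑ s, ∑ y, boundTerm qS qU W f M J u s y
      ≤ ∑ c : Fin M × Fin J → 𝓤, codebookLaw qS qU c
          * ∑ m, ∑ s, ∑ j, ∑ y, matchTerm qS qU W f c m s y (c (m, j)) := by
  calc ∑ u, ∑ s, ∑ y, boundTerm qS qU W f M J u s y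
      = ∑ m : Fin M, ∑ s, ∑ j : Fin J, ∑ y, ∑ u,
          ((M : ℝ) * J)⁻¹ * boundTerm qS qU W f M J u s y := by
        simp only [← mul_sum, sum_const, card_univ, Fintype.card_fin, nsmul_eq_mul]
        rw [sum_comm]
        conv_lhs => arg 2; ext s; rw [sum_comm]
        field_simp
    _ ≤ ∑ m, ∑ s, ∑ j, ∑ y, ∑ u, ∑ c, codebookLaw qS qU c * (if c (m, j) = u then 1 else 0)
          * matchTerm qS qU W f c m s y u := by
        gcongr with m _ s _ j _ y _ u _
        exact inv_mul_boundTerm_le qS qU W f hJ m j s y u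
    _ = ∑ m, ∑ s, ∑ j, ∑ y, ∑ c, codebookLaw qS qU c * matchTerm qS qU W f c m s y (c (m, j)) := by
        refine sum_congr rfl fun m _ => sum_congr rfl fun s _ => sum_congr rfl fun j _ =>
          sum_congr rfl fun y _ => ?_
        rw [sum_comm]
        simp [mul_ite]
    _ = _ := by
        simp only [mul_sum]
        symm
        rw [sum_comm]; refine sum_congr rfl fun m _ => ?_
        rw [sum_comm]; refine sum_congr rfl fun s _ => ?_
        rw [sum_comm]; refine sum_congr rfl fun j _ => ?_
        rw [sum_comm]

end GelfandPinsker

/-- One-shot achievability for the Gelfand–Pinsker channel: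
there is an `M`-code with
`P(M̂ = M) ≥ E_q [ 1 / ((1 + J⁻¹ 2^{i_q(U;S)}) (1 + M J 2^{-i_q(U;Y)})) ]`. -/
theorem oneShot_gelfand_pinsker (qS : FinPMF 𝓢) (W : 𝓧 → 𝓢 → FinPMF 𝓨)
    (qU : 𝓢 → FinPMF 𝓤) (f : 𝓤 → 𝓢 → 𝓧) (M J : ℕ) (hM : 0 < M) (hJ : 0 < J) :
    ∃ (enc : Fin M → 𝓢 → FinPMF 𝓧) (dec : 𝓨 → FinPMF (Fin M)),
      pCorrectGP M qS W enc dec ≥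
        ∑ u : 𝓤, ∑ s : 𝓢, ∑ y : 𝓨, qUSY qS qU W f u s y *
          ((1 + (J : ℝ)⁻¹ * (2 : ℝ) ^ (iUS qS qU u s)) *
           (1 + (M : ℝ) * (J : ℝ) * (2 : ℝ) ^ (-(iUY qS qU W f u y))))⁻¹ := by
  classical
  open GelfandPinsker in
  obtain ⟨c, hc⟩ := exists_le_of_le_sum_mul (codebookLaw_nonneg qS qU) (sum_codebookLaw qS qU)
    ((sum_boundTerm_le_sum_codebookLaw_mul qS qU W f hM hJ).trans
      (sum_le_sum fun c _ => mul_le_mul_of_nonneg_left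
        (sum_matchTerm_le_pCorrectGP qS qU W f hM hJ c) (codebookLaw_nonneg qS qU c)))
  exact ⟨_, _, hc⟩
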